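/- arXiv:0905.4147 — 2 statements merged into one kernel-verified Lean document; each statement's English description precedes it below -/
import Mathlib

section
/- Suppose ε ≤ 1/3, X* and C are finite vertex sets with C ⊆ K_{ε²}(D), |K_{ε²}(D) \ K_{2ε²}(X*)| < ε|C| and |K_{2ε²}(X*) \ K_{3ε²}(C)| < ε²|C|. Then |C \ T_ε(X*)| ≤ (11/2)·ε·|C|. -/
open Finset
open scoped Classical

/-- `Knear G α X` = set of vertices adjacent to all but an `α` fraction of `X`. -/
noncomputable def Knear {V : Type*} [Fintype V] (G : SimpleGraph V) (α : ℝ)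
    (X : Finset V) : Finset V :=
  Finset.univ.filter fun v =>
    (1 - α) * (X.card : ℝ) ≤ ((X.filter fun u => G.Adj v u).card : ℝ)

/-- `Tnear G ε X = K_ε(K_{2ε²}(X)) ∩ K_{2ε²}(X)`. -/
noncomputable def Tnear {V : Type*} [Fintype V] (G : SimpleGraph V) (ε : ℝ)
    (X : Finset V) : Finset V :=
  Knear G ε (Knear G (2 * ε ^ 2) X) ∩ Knear G (2 * ε ^ 2) X

/-- Number of ordered pairs `(u,v) ∈ U × U` with `u ≠ v` and `{u,v} ∈ E`. -/
noncomputable def epairs {V : Type*} (G : SimpleGraph V) (U : Finset V) : ℕ :=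
  ((U ×ˢ U).filter fun p => p.1 ≠ p.2 ∧ G.Adj p.1 p.2).card

lemma mem_Knear' {V : Type*} [Fintype V] (G : SimpleGraph V) (α : ℝ)
    (X : Finset V) (v : V) :
    v ∈ Knear G α X ↔
      (1 - α) * (X.card : ℝ) ≤ ((X.filter fun u => G.Adj v u).card : ℝ) := by
  simp [Knear]

lemma key_arith (ε c k B : ℝ) (hε : 0 < ε) (hεb : ε < 2 / 11)
    (hc0 : 0 ≤ c) (hk : (1 - ε) * c ≤ k) (hBc : B ≤ c) (hB0 : 0 ≤ B)
    (hcount : B * (ε * k - ε ^ 2 * c) ≤ 3 * ε ^ 2 * c * k) :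
    B ≤ (9 / 2) * ε * c := by
  rcases eq_or_lt_of_le hc0 with hceq | hcpos
  · nlinarith
  · have hkpos : 0 < k := by nlinarith
    have h1' : B * k ≤ 3 * ε * c * k + ε * c * B := by nlinarith
    have h2' : ε * c * B ≤ ε * c * c := by
      nlinarith [mul_nonneg (mul_nonneg hε.le hc0) (sub_nonneg.mpr hBc)]
    have hck : c ≤ (11 / 9) * k := by nlinarith
    have h4' : ε * c * c ≤ (11 / 9) * (ε * c * k) := by
      nlinarith [mul_le_mul_of_nonneg_left hck (mul_nonneg hε.le hc0)]
    have h5' : B * k ≤ (9 / 2) * ε * c * k := by nlinarith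
    exact le_of_mul_le_mul_right (by linarith : B * k ≤ ((9 / 2) * ε * c) * k) hkpos

/-- If `X*` is representative with respect to `C ⊆ K_{ε²}(D)`, then
`|C \ T_ε(X*)| ≤ (11/2)·ε·|C|`. -/
theorem C_minus_Tnear_small {V : Type*} [Fintype V] (G : SimpleGraph V)
    (ε : ℝ) (hε : 0 < ε) (hε3 : ε ≤ 1 / 3) (D Xs C : Finset V)
    (hC : C ⊆ Knear G (ε ^ 2) D)
    (h1 : (((Knear G (ε ^ 2) D \ Knear G (2 * ε ^ 2) Xs).card : ℝ)) < ε * (C.card : ℝ))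
    (h2 : (((Knear G (2 * ε ^ 2) Xs \ Knear G (3 * ε ^ 2) C).card : ℝ)) <
      ε ^ 2 * (C.card : ℝ)) :
    ((C \ Tnear G ε Xs).card : ℝ) ≤ (11 / 2) * ε * (C.card : ℝ) := by
  classical
  set c : ℝ := (C.card : ℝ) with hcdef
  have hc0 : (0 : ℝ) ≤ c := by positivity
  by_cases hεbig : 2 / 11 ≤ ε
  · -- trivial case : (11/2) * ε ≥ 1
    have htriv : ((C \ Tnear G ε Xs).card : ℝ) ≤ c := by
      exact_mod_cast Nat.cast_le.mpr (Finset.card_le_card Finset.sdiff_subset)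
    nlinarith
  push_neg at hεbig
  set KE := Knear G (ε ^ 2) D with hKE
  set K2 := Knear G (2 * ε ^ 2) Xs with hK2
  set K3 := Knear G (3 * ε ^ 2) C with hK3
  set KK := Knear G ε K2 with hKKdef
  set M := K2 ∩ K3 with hM
  set k : ℝ := (K2.card : ℝ) with hkdef
  have hk0 : (0 : ℝ) ≤ k := by positivity
  -- Step A : |C \ K2| < ε c
  have hA : ((C \ K2).card : ℝ) < ε * c := by
    have hsub : C \ K2 ⊆ KE \ K2 := Finset.sdiff_subset_sdiff hC le_rfl
    have hle := Finset.card_le_card hsub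
    calc ((C \ K2).card : ℝ) ≤ ((KE \ K2).card : ℝ) := by exact_mod_cast hle
      _ < ε * c := h1
  -- Step B : (1 - ε) c ≤ k
  have hBk : (1 - ε) * c ≤ k := by
    have hpart := Finset.card_inter_add_card_sdiff C K2
    have hint : (C ∩ K2).card ≤ K2.card :=
      Finset.card_le_card Finset.inter_subset_right
    have hcle : (C.card : ℝ) ≤ k + ((C \ K2).card : ℝ) := by
      have h' : C.card ≤ K2.card + (C \ K2).card := by omega
      rw [hkdef]; exact_mod_cast h'
    linarith
  -- Step C : each v ∈ C \ KK has many non-neighbours in M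
  have hStepC : ∀ v ∈ C \ KK,
      ε * k - ε ^ 2 * c ≤ ((M.filter fun u => ¬ G.Adj v u).card : ℝ) := by
    intro v hv
    have hvKK : v ∉ KK := (Finset.mem_sdiff.mp hv).2
    rw [hKKdef, mem_Knear'] at hvKK
    push_neg at hvKK
    have hpart : (K2.filter fun u => G.Adj v u).card
        + (K2.filter fun u => ¬ G.Adj v u).card = K2.card :=
      Finset.card_filter_add_card_filter_not _
    have hmiss : ε * k < ((K2.filter fun u => ¬ G.Adj v u).card : ℝ) := by
      have : ((K2.filter fun u => G.Adj v u).card : ℝ)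
          + ((K2.filter fun u => ¬ G.Adj v u).card : ℝ) = k := by
        rw [hkdef]; exact_mod_cast hpart
      nlinarith
    have hsub : (K2.filter fun u => ¬ G.Adj v u)
        ⊆ (M.filter fun u => ¬ G.Adj v u) ∪ (K2 \ K3) := by
      intro u hu
      simp only [Finset.mem_filter, Finset.mem_union, Finset.mem_sdiff,
        hM, Finset.mem_inter] at hu ⊢
      by_cases hu3 : u ∈ K3
      · exact Or.inl ⟨⟨hu.1, hu3⟩, hu.2⟩
      · exact Or.inr ⟨hu.1, hu3⟩
    have hle := Finset.card_le_card hsub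
    have hle2 := Finset.card_union_le (M.filter fun u => ¬ G.Adj v u) (K2 \ K3)
    have hcast : ((K2.filter fun u => ¬ G.Adj v u).card : ℝ)
        ≤ ((M.filter fun u => ¬ G.Adj v u).card : ℝ) + ((K2 \ K3).card : ℝ) := by
      exact_mod_cast le_trans hle hle2
    linarith
  -- Step D : each u ∈ M has few non-neighbours in C
  have hStepD : ∀ u ∈ M,
      ((C.filter fun v => ¬ G.Adj u v).card : ℝ) ≤ 3 * ε ^ 2 * c := by
    intro u hu
    have huK3 : u ∈ K3 := (Finset.mem_inter.mp hu).2
    rw [hK3, mem_Knear'] at huK3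
    have hpart : (C.filter fun v => G.Adj u v).card
        + (C.filter fun v => ¬ G.Adj u v).card = C.card :=
      Finset.card_filter_add_card_filter_not _
    have hcast : ((C.filter fun v => G.Adj u v).card : ℝ)
        + ((C.filter fun v => ¬ G.Adj u v).card : ℝ) = c := by
      rw [hcdef]; exact_mod_cast hpart
    nlinarith
  -- double counting
  have hswap : ∑ v ∈ C, ((M.filter fun u => ¬ G.Adj v u).card)
      = ∑ u ∈ M, ((C.filter fun v => ¬ G.Adj u v).card) := by
    simp only [Finset.card_filter]
    rw [Finset.sum_comm]
    refine Finset.sum_congr rfl fun u _ => Finset.sum_congr rfl fun v _ => ?_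
    rw [G.adj_comm]
  set B : ℝ := ((C \ KK).card : ℝ) with hBdef
  have hB0 : (0 : ℝ) ≤ B := by positivity
  have hBc : B ≤ c := by
    exact_mod_cast Nat.cast_le.mpr (Finset.card_le_card Finset.sdiff_subset)
  have hMk : ((M.card : ℝ)) ≤ k := by
    exact_mod_cast Nat.cast_le.mpr (Finset.card_le_card Finset.inter_subset_left)
  have hcount : B * (ε * k - ε ^ 2 * c) ≤ 3 * ε ^ 2 * c * k := by
    calc B * (ε * k - ε ^ 2 * c)
        = ∑ _v ∈ C \ KK, (ε * k - ε ^ 2 * c) := by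
          rw [Finset.sum_const, nsmul_eq_mul]
      _ ≤ ∑ v ∈ C \ KK, ((M.filter fun u => ¬ G.Adj v u).card : ℝ) :=
          Finset.sum_le_sum hStepC
      _ ≤ ∑ v ∈ C, ((M.filter fun u => ¬ G.Adj v u).card : ℝ) := by
          refine Finset.sum_le_sum_of_subset_of_nonneg Finset.sdiff_subset ?_
          intro v _ _; positivity
      _ = ∑ u ∈ M, ((C.filter fun v => ¬ G.Adj u v).card : ℝ) := by
          exact_mod_cast congrArg (Nat.cast : ℕ → ℝ) hswap
      _ ≤ ∑ _u ∈ M, (3 * ε ^ 2 * c) := Finset.sum_le_sum hStepD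
      _ = (M.card : ℝ) * (3 * ε ^ 2 * c) := by
          rw [Finset.sum_const, nsmul_eq_mul]
      _ ≤ 3 * ε ^ 2 * c * k := by nlinarith
  -- conclude B ≤ (9/2) ε c
  have hBbound : B ≤ (9 / 2) * ε * c :=
    key_arith ε c k B hε hεbig hc0 hBk hBc hB0 hcount
  -- combine
  have hTsub : C \ Tnear G ε Xs ⊆ (C \ KK) ∪ (C \ K2) := by
    intro v hv
    simp only [Tnear, Finset.mem_sdiff, Finset.mem_union, Finset.mem_inter,
      ← hK2, ← hKKdef] at hv ⊢
    tauto
  have hfinal : ((C \ Tnear G ε Xs).card : ℝ) ≤ B + ((C \ K2).card : ℝ) := by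
    have := le_trans (Finset.card_le_card hTsub)
      (Finset.card_union_le (C \ KK) (C \ K2))
    rw [hBdef]; exact_mod_cast this
  linarith
end

section
/- If D is an ε³-near clique with d = |D|, then the number of vertices v ∈ D with |Γ(v) ∩ D| < (1−ε²)d is at most ε·d + 1/ε²; equivalently |D \ K_{ε²}(D)| ≤ εd + 1/ε². -/
open Finset
open scoped Classical

/-!
An ε³-near clique on d vertices has at most ε³d(d − 1) ordered non-adjacent pairs of distinct
vertices, while each vertex with fewer than (1 − ε²)d neighbours in D is the first entry of more
than ε²d − 1 of them. Hence the number b of such vertices satisfies b(ε²d − 1) ≤ ε³d(d − 1).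
Since (εd + 1/ε²)(ε²d − 1) = ε³d² + d(1 − ε) − 1/ε², this gives b ≤ εd + 1/ε² as soon as
d(1 − ε) > 1/ε²; otherwise already b ≤ d ≤ εd + 1/ε².
-/

section

variable {V : Type*} (G : SimpleGraph V)

lemma epairs_eq_sum_card_filter_adj (U : Finset V) :
    epairs G U = ∑ v ∈ U, #(U.filter fun u => G.Adj v u) := by
  have hadj : epairs G U = #((U ×ˢ U).filter fun p => G.Adj p.1 p.2) := by
    unfold epairs
    congr 1
    exact filter_congr fun p _ => and_iff_right_of_imp G.ne_of_adj
  simp only [hadj, card_filter, sum_product]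

lemma card_filter_adj_lt {U : Finset V} {v : V} (hv : v ∈ U) :
    #(U.filter fun u => G.Adj v u) < #U :=
  card_lt_card <| filter_ssubset.mpr ⟨v, hv, G.irrefl⟩

lemma card_filter_low_degree_mul_le (U : Finset V) (β γ : ℝ)
    (hU : (1 - γ) * #U * (#U - 1 : ℝ) ≤ epairs G U) :
    #(U.filter fun v => (#(U.filter fun u => G.Adj v u) : ℝ) < (1 - β) * #U) * (β * #U - 1)
      ≤ γ * #U * (#U - 1 : ℝ) := by
  set deficit : V → ℝ := fun v => #U - 1 - #(U.filter fun u => G.Adj v u)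
  have deficit_nonneg : ∀ v ∈ U, 0 ≤ deficit v := fun v hv => by
    have : (#(U.filter fun u => G.Adj v u) : ℝ) + 1 ≤ #U := by
      exact_mod_cast card_filter_adj_lt G hv
    simp only [deficit]
    linarith
  have sum_deficit : ∑ v ∈ U, deficit v = #U * (#U - 1) - epairs G U := by
    simp only [deficit, sum_sub_distrib, sum_const, nsmul_eq_mul, epairs_eq_sum_card_filter_adj,
      Nat.cast_sum]
    ring
  calc _ ≤ ∑ v ∈ U.filter fun v => (#(U.filter fun u => G.Adj v u) : ℝ) < (1 - β) * #U,
          deficit v := by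
        rw [← nsmul_eq_mul]
        refine card_nsmul_le_sum _ _ _ fun v hv => ?_
        have := (mem_filter.mp hv).2
        simp only [deficit]
        linarith
    _ ≤ ∑ v ∈ U, deficit v := sum_le_sum_of_subset_of_nonneg (filter_subset _ _)
          fun v hv _ => deficit_nonneg v hv
    _ ≤ _ := by linarith

end

lemma le_mul_add_one_div_sq_of_mul_le {ε d b : ℝ} (hε : 0 < ε) (hd : 0 ≤ d) (hbd : b ≤ d)
    (h : b * (ε ^ 2 * d - 1) ≤ ε ^ 3 * d * (d - 1)) : b ≤ ε * d + 1 / ε ^ 2 := by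
  set k := 1 / ε ^ 2
  have hk : ε ^ 2 * k = 1 := mul_one_div_cancel (pow_ne_zero 2 hε.ne')
  by_cases hsmall : d * (1 - ε) ≤ k
  · linarith
  have hε3d : 0 ≤ ε ^ 3 * d := mul_nonneg (pow_pos hε 3).le hd
  have hpos : 0 < ε ^ 2 * d - 1 := by
    nlinarith [mul_lt_mul_of_pos_left (not_le.mp hsmall) (pow_pos hε 2)]
  refine le_of_mul_le_mul_right (h.trans ?_) hpos
  calc ε ^ 3 * d * (d - 1) ≤ ε ^ 3 * d * (d - 1) + ε ^ 3 * d + (d * (1 - ε) - k) := by linarith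
    _ = (ε * d + k) * (ε ^ 2 * d - 1) := by linear_combination (-d) * hk

lemma sdiff_Knear_eq_filter {V : Type*} [Fintype V] [DecidableEq V] (G : SimpleGraph V)
    (α : ℝ) (X Y : Finset V) :
    Y \ Knear G α X = Y.filter fun v => (#(X.filter fun u => G.Adj v u) : ℝ) < (1 - α) * #X := by
  ext v
  simp [Knear]

theorem few_low_degree_in_near_clique_general {V : Type*} [Fintype V] [DecidableEq V]
    (G : SimpleGraph V) (ε : ℝ) (hε : 0 < ε) (D : Finset V)
    (hD : (epairs G D : ℝ) ≥ (1 - ε ^ 3) * (D.card : ℝ) * ((D.card : ℝ) - 1)) :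
    (((D.filter fun v =>
        (((D.filter fun u => G.Adj v u).card : ℝ)) < (1 - ε ^ 2) * (D.card : ℝ)).card : ℝ))
      ≤ ε * (D.card : ℝ) + 1 / ε ^ 2 ∧
    (((D \ Knear G (ε ^ 2) D).card : ℝ)) ≤ ε * (D.card : ℝ) + 1 / ε ^ 2 := by
  have hlow := le_mul_add_one_div_sq_of_mul_le hε (Nat.cast_nonneg _)
    (by exact_mod_cast card_filter_le _ _) (card_filter_low_degree_mul_le G D (ε ^ 2) (ε ^ 3) hD)
  exact ⟨hlow, by rwa [sdiff_Knear_eq_filter]⟩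

/-- If `D` is an `ε³`-near clique of size `d`, then the number of vertices
`v ∈ D` with fewer than `(1−ε²)d` neighbors in `D` is at most `εd + 1/ε²`;
equivalently `|D \ K_{ε²}(D)| ≤ εd + 1/ε²`. -/
theorem few_low_degree_in_near_clique {V : Type*} [Fintype V] [DecidableEq V]
    (G : SimpleGraph V) (ε : ℝ) (hε : 0 < ε) (hε3 : ε ≤ 1 / 3) (D : Finset V)
    (hD : (epairs G D : ℝ) ≥ (1 - ε ^ 3) * (D.card : ℝ) * ((D.card : ℝ) - 1)) :
    (((D.filter fun v =>
        (((D.filter fun u => G.Adj v u).card : ℝ)) < (1 - ε ^ 2) * (D.card : ℝ)).card : ℝ))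
      ≤ ε * (D.card : ℝ) + 1 / ε ^ 2 ∧
    (((D \ Knear G (ε ^ 2) D).card : ℝ)) ≤ ε * (D.card : ℝ) + 1 / ε ^ 2 :=
  few_low_degree_in_near_clique_general G ε hε D hD
end
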